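/- Let 1 ≤ n ≤ d and suppose D_n(𝒞) ≠ 0. Then the j-th entries of the solution vectors Φ_n^+ and Φ_n^- coincide for every 1 ≤ j ≤ 2d, and are negatives of each other for every 2d+1 ≤ j ≤ 4d. -/

import Mathlib

open Complex Matrix

noncomputable section

def Lv (d : ℕ) : ℤ := if Even d then d / 2 else d

def rv (d : ℕ) : ℤ := if Even d then 1 else 2

/-- The coefficient of `T^k` in `f_𝒞(T) = Σ_{j=0}^d C_{-(L-rj)} T^{d-j}` is `C_{L-rk}`. -/
def coeffC (d : ℕ) (C : ℤ → ℂ) : ℕ → ℂ := fun k => C (Lv d - rv d * k)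

def SCM (a : ℕ → ℂ) (d n : ℕ) : Matrix (Fin n) (Fin n) ℂ :=
  Matrix.of fun j k => if (j : ℕ) ≤ (k : ℕ) then a (d - ((k : ℕ) - (j : ℕ))) else 0

def SCN (a : ℕ → ℂ) (n : ℕ) : Matrix (Fin n) (Fin n) ℂ :=
  Matrix.of fun j k => if (j : ℕ) ≤ (k : ℕ) then a ((k : ℕ) - (j : ℕ)) else 0

def SCL (a : ℕ → ℂ) (d n : ℕ) (ε : ℂ) : Matrix (Fin n ⊕ Fin n) (Fin n ⊕ Fin n) ℂ :=
  Matrix.fromBlocks (SCM a d n)ᵀ (ε • (SCN a n)ᴴ) (ε • SCN a n)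
    ((SCM a d n).map (starRingEnd ℂ))

/-- The Schur–Cohn determinant `D_n(𝒞)`, with `D_0(𝒞) = 1`. -/
def SCD (d : ℕ) (C : ℤ → ℂ) (n : ℕ) : ℂ :=
  if n = 0 then 1 else (SCL (coeffC d C) d n 1).det

/-- The `2d × 2d` lower-triangular Toeplitz matrix `𝔢₀(𝒞)` with `(j,k)`-entry
`C_{−L+r(j−k)}` when `0 ≤ j−k ≤ d` and `0` otherwise. -/
def e0mat (d : ℕ) (C : ℤ → ℂ) : Matrix (Fin (2 * d)) (Fin (2 * d)) ℂ :=
  Matrix.of fun j k =>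
    if (k : ℕ) ≤ (j : ℕ) ∧ (j : ℕ) - (k : ℕ) ≤ d then
      C (-(Lv d) + rv d * ((j : ℕ) - (k : ℕ) : ℕ)) else 0

/-- The `2d × 2d` matrix `𝔢_{1,n}(𝒞)` whose only nonzero entries are the
`(m+j, d+m)`-entries (1-based), equal to `C_{L−rj}`, for `1 ≤ m ≤ n`, `0 ≤ j ≤ d`. -/
def e1mat (d n : ℕ) (C : ℤ → ℂ) : Matrix (Fin (2 * d)) (Fin (2 * d)) ℂ :=
  Matrix.of fun j k =>
    if d ≤ (k : ℕ) ∧ (k : ℕ) + 1 ≤ d + n ∧ (k : ℕ) ≤ (j : ℕ) + d ∧ (j : ℕ) ≤ (k : ℕ) then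
      C (Lv d - rv d * ((j : ℤ) - (k : ℤ) + d)) else 0

/-- The `2d × 2d` matrix `𝔢_{2,n}(𝒞)` whose only nonzero entries are the
`(d−n+m+j, 2d−n+m)`-entries (1-based), equal to `C_{L−rj}`, for `1 ≤ m ≤ n`, `0 ≤ j ≤ d`. -/
def e2mat (d n : ℕ) (C : ℤ → ℂ) : Matrix (Fin (2 * d)) (Fin (2 * d)) ℂ :=
  Matrix.of fun j k =>
    if 2 * d ≤ (k : ℕ) + n ∧ (k : ℕ) ≤ (j : ℕ) + d ∧ (j : ℕ) ≤ (k : ℕ) then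
      C (Lv d - rv d * ((j : ℤ) - (k : ℤ) + d)) else 0

/-- The `2d × 2d` anti-diagonal matrix `J_{2d}`. -/
def Jmat (d : ℕ) : Matrix (Fin (2 * d)) (Fin (2 * d)) ℂ :=
  Matrix.of fun j k => if (j : ℕ) + (k : ℕ) + 1 = 2 * d then 1 else 0

/-- The `8d × 8d` matrix `𝔈₀(𝒞) = blockdiag(𝔢₀, 𝔢₀, ᵗconj(𝔢₀), ᵗconj(𝔢₀))`, indexed by
`Fin 4 × Fin (2d)` (the first coordinate is the block index). -/
def bigE0 (d : ℕ) (C : ℤ → ℂ) :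
    Matrix (Fin 4 × Fin (2 * d)) (Fin 4 × Fin (2 * d)) ℂ :=
  Matrix.of fun p q =>
    if p.1 = q.1 then
      (if (p.1 : ℕ) ≤ 1 then e0mat d C p.2 q.2 else (e0mat d C)ᴴ p.2 q.2)
    else 0

/-- The `8d × 8d` matrix `𝔈ₙ^♯(𝒞)` with `(1,3)`-block `conj(𝔢_{2,n})`, `(2,4)`-block
`conj(𝔢_{1,n})`, `(3,1)`-block `J_{2d}·𝔢_{1,n}·J_{2d}`, `(4,2)`-block `J_{2d}·𝔢_{2,n}·J_{2d}`,
and all other blocks zero. -/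
def bigEsharp (d n : ℕ) (C : ℤ → ℂ) :
    Matrix (Fin 4 × Fin (2 * d)) (Fin 4 × Fin (2 * d)) ℂ :=
  Matrix.of fun p q =>
    if p.1 = 0 ∧ q.1 = 2 then ((e2mat d n C).map (starRingEnd ℂ)) p.2 q.2
    else if p.1 = 1 ∧ q.1 = 3 then ((e1mat d n C).map (starRingEnd ℂ)) p.2 q.2
    else if p.1 = 2 ∧ q.1 = 0 then (Jmat d * e1mat d n C * Jmat d) p.2 q.2
    else if p.1 = 3 ∧ q.1 = 1 then (Jmat d * e2mat d n C * Jmat d) p.2 q.2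
    else 0

/-- The vector `χ ∈ ℂ^{8d}` with first and last entries `1` and all other entries `0`. -/
def chiVec (d : ℕ) : Fin 4 × Fin (2 * d) → ℂ := fun p =>
  if (p.1 = 0 ∧ (p.2 : ℕ) = 0) ∨ (p.1 = 3 ∧ (p.2 : ℕ) + 1 = 2 * d) then 1 else 0

/-- The `8d × 8d` matrix `𝔍 = [[0, I_{4d}],[I_{4d}, 0]]` (swapping blocks `0 ↔ 2`, `1 ↔ 3`). -/
def bigJ (d : ℕ) : Matrix (Fin 4 × Fin (2 * d)) (Fin 4 × Fin (2 * d)) ℂ :=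
  Matrix.of fun p q => if ((p.1 : ℕ) + 2) % 4 = (q.1 : ℕ) ∧ p.2 = q.2 then 1 else 0


/-!
Let `S = blockSign d` be the diagonal matrix acting by `1, -1, -1, 1` on the four blocks. As
`𝔈₀` is block diagonal while `𝔈ₙ^♯` and `𝔍` only couple blocks of opposite signs, `S` commutes
with `𝔈₀`, anticommutes with `𝔈ₙ^♯` and `𝔍`, and fixes `χ`. Multiplying the equation of `Φ_n^+`
by `S` gives `(𝔈₀ - 𝔈ₙ^♯) S Φ_n^+ = 𝔈₀χ + 𝔍𝔈₀χ`, so `S Φ_n^+ = Φ_n^-` as soon as `𝔈₀ - 𝔈ₙ^♯`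
is injective.

The kernel equations of `𝔈₀ - 𝔈ₙ^♯` split into two systems on pairs of blocks, exchanged (up
to swapping the two unknowns) by `x ↦ conj (J x)`. In the first one, forward substitution
through the lower triangular Toeplitz matrix `𝔢₀`, whose diagonal is `C_{-L} ≠ 0`, kills the
first `d - n` entries of block `0`. The next `n` rows of block `0` and the last `n` rows of
block `2` are then exactly the Schur–Cohn system of size `2n`, so `D_n(𝒞) ≠ 0` kills the
remaining entries that `𝔢_{1,n}` sees, and the invertible triangular matrices `𝔢₀ᴴ` and `𝔢₀`
finish the argument.
-/

open Function

lemma Matrix.IsLowerTriangular.apply_eq_zero_of_mulVec_apply_eq_zero {ι R : Type*} [Fintype ι]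
    [LinearOrder ι] [WellFoundedLT ι] [NonUnitalNonAssocSemiring R] [NoZeroDivisors R]
    {M : Matrix ι ι R} (hM : M.IsLowerTriangular) (hdiag : ∀ i, M i i ≠ 0) {u : ι → R} {i : ι}
    (hu : ∀ j ≤ i, (M *ᵥ u) j = 0) : u i = 0 := by
  induction i using WellFoundedLT.induction with
  | ind i ih =>
    have hrow : (M *ᵥ u) i = M i i * u i := by
      refine Finset.sum_eq_single i (fun j _ hji => ?_) (by simp)
      rcases lt_or_gt_of_ne hji with hlt | hgt
      · rw [ih j hlt fun k hk => hu k (hk.trans hlt.le), mul_zero]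
      · exact mul_eq_zero_of_left (hM (OrderDual.toDual_lt_toDual.2 hgt)) _
    exact (mul_eq_zero.1 ((hu i le_rfl).symm.trans hrow).symm).resolve_left (hdiag i)

lemma mulVec_eq_of_anticommute {ι R : Type*} [Fintype ι] [Ring R] {S E F J : Matrix ι ι R}
    {χ x y : ι → R} (hE : S * E = E * S) (hF : S * F = -(F * S)) (hJ : S * J = -(J * S))
    (hχ : S *ᵥ χ = χ) (hker : ∀ z, (E - F) *ᵥ z = 0 → z = 0)
    (hx : (E + F) *ᵥ x = E *ᵥ χ - J *ᵥ E *ᵥ χ) (hy : (E - F) *ᵥ y = E *ᵥ χ + J *ᵥ E *ᵥ χ) :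
    S *ᵥ x = y := by
  have hEF : (E - F) * S = S * (E + F) := by rw [sub_mul, mul_add, hE, hF, sub_eq_add_neg]
  have hb : S *ᵥ E *ᵥ χ = E *ᵥ χ := by rw [mulVec_mulVec, hE, ← mulVec_mulVec, hχ]
  have hJb : S *ᵥ J *ᵥ E *ᵥ χ = -(J *ᵥ E *ᵥ χ) := by
    rw [mulVec_mulVec, hJ, neg_mulVec, ← mulVec_mulVec, hb]
  refine sub_eq_zero.1 (hker _ ?_)
  rw [mulVec_sub, mulVec_mulVec, hEF, ← mulVec_mulVec, hx, hy, mulVec_sub, hb, hJb]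
  abel

lemma Fin.sum_eq_sum_window_of_support {M : Type*} [AddCommMonoid M] {N c n : ℕ}
    (hc : c + n ≤ N) (f : Fin N → M) (hf : ∀ k : Fin N, f k ≠ 0 → c ≤ k ∧ (k : ℕ) < c + n) :
    ∑ k, f k = ∑ s : Fin n, f ⟨c + s, by omega⟩ := by
  refine (Fintype.sum_of_injective (fun s : Fin n => (⟨c + s, by omega⟩ : Fin N))
    (fun s t h => Fin.ext (by simpa using h)) _ f (fun k hk => ?_) fun _ => rfl).symm
  by_contra hne
  obtain ⟨h₁, h₂⟩ := hf k hne
  exact hk ⟨⟨k - c, by omega⟩, Fin.ext (by dsimp only; omega)⟩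

lemma star_comp_rev_mulVec {m : ℕ} (M : Matrix (Fin m) (Fin m) ℂ) (v : Fin m → ℂ) :
    star ((M *ᵥ v) ∘ Fin.rev) = (M.submatrix Fin.rev Fin.rev).map star *ᵥ star (v ∘ Fin.rev) := by
  have h : (M *ᵥ v) ∘ Fin.rev = M.submatrix Fin.rev Fin.revPerm *ᵥ (v ∘ Fin.rev) := by
    rw [submatrix_mulVec_equiv, Fin.revPerm_symm]
    congr 2
    ext
    simp
  rw [h, star_mulVec, ← mulVec_transpose]
  rfl

lemma Jmat_mul_mul_Jmat {d : ℕ} (A : Matrix (Fin (2 * d)) (Fin (2 * d)) ℂ) :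
    Jmat d * A * Jmat d = A.submatrix Fin.rev Fin.rev := by
  have hJ : ∀ j k : Fin (2 * d), Jmat d j k = if k = j.rev then 1 else 0 := fun j k =>
    if_congr (by rw [Fin.ext_iff, Fin.val_rev]; omega) rfl rfl
  have hJ' : ∀ j k : Fin (2 * d), Jmat d j k = if j = k.rev then 1 else 0 := fun j k =>
    if_congr (by rw [Fin.ext_iff, Fin.val_rev]; omega) rfl rfl
  ext j k
  simp [mul_apply, hJ j, hJ' _ k]

section BlockSign

variable {d n : ℕ} {C : ℤ → ℂ}

def blockSign (d : ℕ) : Matrix (Fin 4 × Fin (2 * d)) (Fin 4 × Fin (2 * d)) ℂ :=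
  diagonal fun p => ![1, -1, -1, 1] p.1

lemma blockSign_mul_bigE0 : blockSign d * bigE0 d C = bigE0 d C * blockSign d := by
  ext ⟨r, i⟩ ⟨s, k⟩
  simp only [blockSign, diagonal_mul, mul_diagonal, bigE0, of_apply]
  split_ifs with h <;> simp [h, mul_comm]

lemma blockSign_mul_bigEsharp :
    blockSign d * bigEsharp d n C = -(bigEsharp d n C * blockSign d) := by
  ext ⟨r, i⟩ ⟨s, k⟩
  simp only [blockSign, diagonal_mul, mul_diagonal, bigEsharp, of_apply, Matrix.neg_apply]
  fin_cases r <;> fin_cases s <;> simp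

lemma blockSign_mul_bigJ : blockSign d * bigJ d = -(bigJ d * blockSign d) := by
  ext ⟨r, i⟩ ⟨s, k⟩
  simp only [blockSign, diagonal_mul, mul_diagonal, bigJ, of_apply, Matrix.neg_apply]
  fin_cases r <;> fin_cases s <;> simp [apply_ite]

lemma blockSign_mulVec_chiVec : blockSign d *ᵥ chiVec d = chiVec d := by
  ext ⟨r, i⟩
  simp only [blockSign, mulVec_diagonal, chiVec]
  fin_cases r <;> simp

end BlockSign

lemma rv_mul_eq_two_mul_Lv (d : ℕ) : rv d * d = 2 * Lv d := by
  unfold rv Lv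
  split_ifs with h
  · obtain ⟨c, rfl⟩ := h
    push_cast
    omega
  · rfl

section Entries

variable {d n : ℕ} {C : ℤ → ℂ}

lemma coeffC_self : coeffC d C d = C (-Lv d) := by
  have h := rv_mul_eq_two_mul_Lv d
  rw [coeffC]
  congr 1
  linear_combination -h

lemma e0mat_apply (j k : Fin (2 * d)) :
    e0mat d C j k = if (k : ℕ) ≤ j ∧ (j : ℕ) ≤ k + d then coeffC d C (d - (j - k)) else 0 := by
  have h := rv_mul_eq_two_mul_Lv d
  simp only [e0mat, of_apply, coeffC]
  split_ifs with h₁ h₂ h₂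
  · congr 1
    push_cast [Nat.cast_sub h₁.1, Nat.cast_sub (show (j : ℕ) - k ≤ d by omega)]
    linear_combination h
  all_goals first | rfl | omega

lemma e1mat_apply (j k : Fin (2 * d)) :
    e1mat d n C j k = if d ≤ (k : ℕ) ∧ (k : ℕ) < d + n ∧ (j : ℕ) ≤ k ∧ (k : ℕ) ≤ j + d then
      coeffC d C (d - (k - j)) else 0 := by
  simp only [e1mat, of_apply, coeffC]
  split_ifs with h₁ h₂ h₂
  · congr 1
    push_cast [Nat.cast_sub (show (k : ℕ) - j ≤ d by omega), Nat.cast_sub h₁.2.2.2]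
    ring
  all_goals first | rfl | omega

lemma e2mat_apply (j k : Fin (2 * d)) :
    e2mat d n C j k = if 2 * d ≤ (k : ℕ) + n ∧ (j : ℕ) ≤ k ∧ (k : ℕ) ≤ j + d then
      coeffC d C (d - (k - j)) else 0 := by
  simp only [e2mat, of_apply, coeffC]
  split_ifs with h₁ h₂ h₂
  · congr 1
    push_cast [Nat.cast_sub (show (k : ℕ) - j ≤ d by omega), Nat.cast_sub h₁.2.2]
    ring
  all_goals first | rfl | omega

lemma e0mat_apply_self (j : Fin (2 * d)) : e0mat d C j j = C (-Lv d) := by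
  simp [e0mat_apply, coeffC_self]

lemma e0mat_rev_rev (j k : Fin (2 * d)) : e0mat d C j.rev k.rev = e0mat d C k j := by
  simp only [e0mat_apply, Fin.val_rev]
  have := j.isLt
  have := k.isLt
  split_ifs <;> first | rfl | (congr 1; omega)

lemma e0mat_isLowerTriangular : (e0mat d C).IsLowerTriangular := by
  intro j k hjk
  rw [e0mat_apply, if_neg]
  exact fun h => not_le.2 (Fin.lt_def.1 (OrderDual.toDual_lt_toDual.1 hjk)) h.1

lemma det_e0mat : (e0mat d C).det = C (-Lv d) ^ (2 * d) := by
  simp [det_of_isLowerTriangular _ e0mat_isLowerTriangular, e0mat_apply_self]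

end Entries

section SchurCohn

variable {d n : ℕ} {C : ℤ → ℂ}

lemma SCL_mulVec_inl (hnd : n ≤ d) {u v : Fin (2 * d) → ℂ}
    (hu : ∀ k : Fin (2 * d), (k : ℕ) < d - n → u k = 0) (t : Fin n) :
    (SCL (coeffC d C) d n 1 *ᵥ Sum.elim (fun s => u ⟨d - n + s, by omega⟩)
        (fun s => -v ⟨2 * d - n + s, by omega⟩)) (Sum.inl t) =
      (e0mat d C *ᵥ u - (e2mat d n C).map (starRingEnd ℂ) *ᵥ v) ⟨d - n + t, by omega⟩ := by
  have ht := t.isLt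
  have he₀ : (e0mat d C *ᵥ u) ⟨d - n + t, by omega⟩ =
      ∑ s : Fin n, (SCM (coeffC d C) d n)ᵀ t s * u ⟨d - n + s, by omega⟩ := by
    rw [mulVec, dotProduct,
      Fin.sum_eq_sum_window_of_support (N := 2 * d) (n := n) (c := d - n) (by omega)]
    · refine Finset.sum_congr rfl fun s _ => ?_
      simp only [transpose_apply, SCM, of_apply, e0mat_apply]
      congr 1
      split_ifs <;> first | rfl | (congr 1; omega)
    · intro k hk
      have h₁ := left_ne_zero_of_mul hk
      rw [e0mat_apply] at h₁
      split_ifs at h₁ with h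
      · simp only at h
        exact ⟨not_lt.1 fun hk' => right_ne_zero_of_mul hk (hu k hk'), by omega⟩
      · exact absurd rfl h₁
  have he₂ : ((e2mat d n C).map (starRingEnd ℂ) *ᵥ v) ⟨d - n + t, by omega⟩ =
      ∑ s : Fin n, (SCN (coeffC d C) n)ᴴ t s * v ⟨2 * d - n + s, by omega⟩ := by
    rw [mulVec, dotProduct,
      Fin.sum_eq_sum_window_of_support (N := 2 * d) (n := n) (c := 2 * d - n) (by omega)]
    · refine Finset.sum_congr rfl fun s _ => ?_
      simp only [conjTranspose_apply, map_apply, SCN, of_apply, e2mat_apply, RCLike.star_def]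
      congr 1
      split_ifs <;> first | rfl | (congr 2; omega)
    · intro k hk
      have h₁ := left_ne_zero_of_mul hk
      rw [map_apply, e2mat_apply] at h₁
      split_ifs at h₁ with h
      · simp only at h
        omega
      · exact absurd (map_zero (starRingEnd ℂ)) h₁
  simp only [mulVec, dotProduct, Fintype.sum_sum_type, SCL, fromBlocks_apply₁₁,
    fromBlocks_apply₁₂, Sum.elim_inl, Sum.elim_inr, one_smul, mul_neg, Finset.sum_neg_distrib]
  rw [Pi.sub_apply, he₀, he₂, sub_eq_add_neg]

lemma SCL_mulVec_inr (hnd : n ≤ d) {u v : Fin (2 * d) → ℂ} (t : Fin n) :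
    (SCL (coeffC d C) d n 1 *ᵥ Sum.elim (fun s => u ⟨d - n + s, by omega⟩)
        (fun s => -v ⟨2 * d - n + s, by omega⟩)) (Sum.inr t) =
      ((e1mat d n C).submatrix Fin.rev Fin.rev *ᵥ u - (e0mat d C)ᴴ *ᵥ v)
        ⟨2 * d - n + t, by omega⟩ := by
  have ht := t.isLt
  have he₁ : ((e1mat d n C).submatrix Fin.rev Fin.rev *ᵥ u) ⟨2 * d - n + t, by omega⟩ =
      ∑ s : Fin n, SCN (coeffC d C) n t s * u ⟨d - n + s, by omega⟩ := by
    rw [mulVec, dotProduct,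
      Fin.sum_eq_sum_window_of_support (N := 2 * d) (n := n) (c := d - n) (by omega)]
    · refine Finset.sum_congr rfl fun s _ => ?_
      simp only [submatrix_apply, SCN, of_apply, e1mat_apply, Fin.val_rev]
      congr 1
      split_ifs <;> first | rfl | (congr 1; omega)
    · intro k hk
      have h₁ := left_ne_zero_of_mul hk
      rw [submatrix_apply, e1mat_apply] at h₁
      split_ifs at h₁ with h
      · simp only [Fin.val_rev] at h
        omega
      · exact absurd rfl h₁
  have he₀ : ((e0mat d C)ᴴ *ᵥ v) ⟨2 * d - n + t, by omega⟩ =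
      ∑ s : Fin n, (SCM (coeffC d C) d n).map (starRingEnd ℂ) t s *
        v ⟨2 * d - n + s, by omega⟩ := by
    rw [mulVec, dotProduct,
      Fin.sum_eq_sum_window_of_support (N := 2 * d) (n := n) (c := 2 * d - n) (by omega)]
    · refine Finset.sum_congr rfl fun s _ => ?_
      simp only [conjTranspose_apply, map_apply, SCM, of_apply, e0mat_apply, RCLike.star_def]
      congr 1
      split_ifs <;> first | rfl | (congr 2; omega)
    · intro k hk
      have h₁ := left_ne_zero_of_mul hk
      rw [conjTranspose_apply, e0mat_apply] at h₁
      split_ifs at h₁ with h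
      · simp only at h
        omega
      · exact absurd (star_zero ℂ) h₁
  simp only [mulVec, dotProduct, Fintype.sum_sum_type, SCL, fromBlocks_apply₂₁,
    fromBlocks_apply₂₂, Sum.elim_inl, Sum.elim_inr, one_smul, mul_neg, Finset.sum_neg_distrib]
  rw [Pi.sub_apply, he₁, he₀, sub_eq_add_neg]

lemma eq_zero_of_mulVec_e0mat_eq_e2mat (hC : C (-Lv d) ≠ 0)
    (hD : (SCL (coeffC d C) d n 1).det ≠ 0) (hnd : n ≤ d) {u v : Fin (2 * d) → ℂ}
    (h₁ : e0mat d C *ᵥ u = (e2mat d n C).map (starRingEnd ℂ) *ᵥ v)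
    (h₂ : (e0mat d C)ᴴ *ᵥ v = (e1mat d n C).submatrix Fin.rev Fin.rev *ᵥ u) :
    u = 0 ∧ v = 0 := by
  have hdet : (e0mat d C).det ≠ 0 := by
    rw [det_e0mat]
    exact pow_ne_zero _ hC
  have hu₀ : ∀ k : Fin (2 * d), (k : ℕ) < d - n → u k = 0 := fun k hk =>
    e0mat_isLowerTriangular.apply_eq_zero_of_mulVec_apply_eq_zero
      (fun j => by rwa [e0mat_apply_self]) fun j hj => by
        rw [h₁, mulVec, dotProduct]
        refine Finset.sum_eq_zero fun l _ => mul_eq_zero_of_left ?_ _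
        rw [map_apply, e2mat_apply, if_neg (by rw [Fin.le_def] at hj; omega), map_zero]
  have hy := eq_zero_of_mulVec_eq_zero hD (funext fun
    | .inl t => by rw [SCL_mulVec_inl hnd hu₀, h₁, sub_self]; rfl
    | .inr t => by rw [SCL_mulVec_inr hnd, h₂, sub_self]; rfl)
  have hu₁ : ∀ k : Fin (2 * d), d - n ≤ k → (k : ℕ) < d → u k = 0 := fun k hk₁ hk₂ => by
    simpa [Nat.add_sub_cancel' hk₁] using congr_fun hy (.inl ⟨k - (d - n), by omega⟩)
  have hv : v = 0 := by
    refine eq_zero_of_mulVec_eq_zero (by rwa [det_conjTranspose, star_ne_zero]) ?_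
    rw [h₂]
    ext j
    refine (Finset.sum_eq_zero fun k _ => ?_ : dotProduct _ u = 0)
    by_cases hk : d - n ≤ (k : ℕ) ∧ (k : ℕ) < d
    · rw [hu₁ k hk.1 hk.2, mul_zero]
    · rw [submatrix_apply, e1mat_apply, if_neg (by simp only [Fin.val_rev]; omega), zero_mul]
  refine ⟨eq_zero_of_mulVec_eq_zero hdet ?_, hv⟩
  rw [h₁, hv, mulVec_zero]

lemma eq_zero_of_mulVec_e0mat_eq_e1mat (hC : C (-Lv d) ≠ 0)
    (hD : (SCL (coeffC d C) d n 1).det ≠ 0) (hnd : n ≤ d) {x y : Fin (2 * d) → ℂ}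
    (h₁ : e0mat d C *ᵥ x = (e1mat d n C).map (starRingEnd ℂ) *ᵥ y)
    (h₂ : (e0mat d C)ᴴ *ᵥ y = (e2mat d n C).submatrix Fin.rev Fin.rev *ᵥ x) :
    x = 0 ∧ y = 0 := by
  have h₁' := congrArg (fun w => star (w ∘ Fin.rev)) h₁
  have h₂' := congrArg (fun w => star (w ∘ Fin.rev)) h₂
  simp only [star_comp_rev_mulVec] at h₁' h₂'
  obtain ⟨hy, hx⟩ := eq_zero_of_mulVec_e0mat_eq_e2mat hC hD hnd (u := star (y ∘ Fin.rev))
    (v := star (x ∘ Fin.rev)) (by convert h₂' using 2 <;> ext <;> simp [e0mat_rev_rev])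
    (by convert h₁' using 2 <;> ext <;> simp [e0mat_rev_rev])
  exact ⟨funext fun i => by simpa using congr_fun hx i.rev,
    funext fun i => by simpa using congr_fun hy i.rev⟩

lemma SCD_eq_det : SCD d C n = (SCL (coeffC d C) d n 1).det := by
  unfold SCD
  split_ifs with h
  · subst h
    exact det_isEmpty.symm
  · rfl

end SchurCohn

section BlockMatrices

variable {d n : ℕ} {C : ℤ → ℂ}

lemma mulVec_blocks_of_bigE0_sub_bigEsharp_mulVec_eq_zero {x : Fin 4 × Fin (2 * d) → ℂ}
    (hx : (bigE0 d C - bigEsharp d n C) *ᵥ x = 0) :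
    e0mat d C *ᵥ curry x 0 = (e2mat d n C).map (starRingEnd ℂ) *ᵥ curry x 2 ∧
    (e0mat d C)ᴴ *ᵥ curry x 2 = (e1mat d n C).submatrix Fin.rev Fin.rev *ᵥ curry x 0 ∧
    e0mat d C *ᵥ curry x 1 = (e1mat d n C).map (starRingEnd ℂ) *ᵥ curry x 3 ∧
    (e0mat d C)ᴴ *ᵥ curry x 3 = (e2mat d n C).submatrix Fin.rev Fin.rev *ᵥ curry x 1 := by
  have h : ∀ r i, ((bigE0 d C - bigEsharp d n C) *ᵥ x) (r, i) = 0 := fun r i => by rw [hx]; rfl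
  have h₀ := h 0
  have h₁ := h 1
  have h₂ := h 2
  have h₃ := h 3
  simp only [mulVec, dotProduct, Fintype.sum_prod_type, Fin.sum_univ_four, Matrix.sub_apply,
    bigE0, bigEsharp, of_apply, Fin.reduceEq, ↓reduceIte, and_true, and_false,
    Fin.coe_ofNat_eq_mod, Nat.reduceMod, Nat.not_ofNat_le_one, zero_le, Std.le_refl, sub_zero,
    zero_sub, zero_mul, neg_mul, Finset.sum_const_zero, Finset.sum_neg_distrib, map_apply,
    conjTranspose_apply, RCLike.star_def, Jmat_mul_mul_Jmat]
    at h₀ h₁ h₂ h₃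
  refine ⟨funext fun i => ?_, funext fun i => ?_, funext fun i => ?_, funext fun i => ?_⟩ <;>
    simp only [mulVec, dotProduct, curry, map_apply, conjTranspose_apply, RCLike.star_def]
  · linear_combination h₀ i
  · linear_combination h₂ i
  · linear_combination h₁ i
  · linear_combination h₃ i

lemma eq_zero_of_bigE0_sub_bigEsharp_mulVec_eq_zero (hC : C (-Lv d) ≠ 0) (hD : SCD d C n ≠ 0)
    (hnd : n ≤ d) {x : Fin 4 × Fin (2 * d) → ℂ} (hx : (bigE0 d C - bigEsharp d n C) *ᵥ x = 0) :
    x = 0 := by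
  rw [SCD_eq_det] at hD
  obtain ⟨h₀, h₂, h₁, h₃⟩ := mulVec_blocks_of_bigE0_sub_bigEsharp_mulVec_eq_zero hx
  obtain ⟨hx₀, hx₂⟩ := eq_zero_of_mulVec_e0mat_eq_e2mat hC hD hnd h₀ h₂
  obtain ⟨hx₁, hx₃⟩ := eq_zero_of_mulVec_e0mat_eq_e1mat hC hD hnd h₁ h₃
  ext ⟨r, i⟩
  fin_cases r
  · exact congr_fun hx₀ i
  · exact congr_fun hx₁ i
  · exact congr_fun hx₂ i
  · exact congr_fun hx₃ i

end BlockMatrices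

theorem Phi_plus_eq_Phi_minus_on_blocks_general
    (d : ℕ) (C : ℤ → ℂ) (hC : C (Lv d) * C (-(Lv d)) ≠ 0)
    (n : ℕ) (hnd : n ≤ d) (hD : SCD d C n ≠ 0)
    (Φp Φm : Fin 4 × Fin (2 * d) → ℂ)
    (hΦp : (bigE0 d C + bigEsharp d n C).mulVec Φp
      = (bigE0 d C).mulVec (chiVec d) - (bigJ d).mulVec ((bigE0 d C).mulVec (chiVec d)))
    (hΦm : (bigE0 d C - bigEsharp d n C).mulVec Φm
      = (bigE0 d C).mulVec (chiVec d) + (bigJ d).mulVec ((bigE0 d C).mulVec (chiVec d))) :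
    ∀ i : Fin (2 * d), Φp (0, i) = Φm (0, i) ∧ Φp (1, i) = -Φm (1, i) := by
  have hS : blockSign d *ᵥ Φp = Φm :=
    mulVec_eq_of_anticommute blockSign_mul_bigE0 blockSign_mul_bigEsharp blockSign_mul_bigJ
      blockSign_mulVec_chiVec
      (fun _ => eq_zero_of_bigE0_sub_bigEsharp_mulVec_eq_zero (right_ne_zero_of_mul hC) hD hnd)
      hΦp hΦm
  intro i
  have h₀ := congr_fun hS (0, i)
  have h₁ := congr_fun hS (1, i)
  simp only [blockSign, mulVec_diagonal, cons_val_zero, cons_val_one, one_mul, neg_one_mul]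
    at h₀ h₁
  exact ⟨h₀, by rw [← h₁, neg_neg]⟩

/-- Lemma 3.7: the first `2d` entries of `Φ_n^+` and `Φ_n^-` coincide, and the next `2d`
entries are negatives of each other. -/
theorem Phi_plus_eq_Phi_minus_on_blocks
    (d : ℕ) (hd : 0 < d) (C : ℤ → ℂ) (hC : C (Lv d) * C (-(Lv d)) ≠ 0)
    (n : ℕ) (hn1 : 1 ≤ n) (hnd : n ≤ d) (hD : SCD d C n ≠ 0)
    (Φp Φm : Fin 4 × Fin (2 * d) → ℂ)
    (hΦp : (bigE0 d C + bigEsharp d n C).mulVec Φp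
      = (bigE0 d C).mulVec (chiVec d) - (bigJ d).mulVec ((bigE0 d C).mulVec (chiVec d)))
    (hΦm : (bigE0 d C - bigEsharp d n C).mulVec Φm
      = (bigE0 d C).mulVec (chiVec d) + (bigJ d).mulVec ((bigE0 d C).mulVec (chiVec d))) :
    ∀ i : Fin (2 * d), Φp (0, i) = Φm (0, i) ∧ Φp (1, i) = -Φm (1, i) :=
  Phi_plus_eq_Phi_minus_on_blocks_general d C hC n hnd hD Φp Φm hΦp hΦm
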